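/- Let d ≥ 2 and let φ : ℝ → [0,∞) be a convex, non-increasing margin-based loss. Then the supremum-based surrogate φ̃(f,x,y) = sup_{x' : ‖x−x'‖ ≤ γ} φ(y·f(x')) is not H_lin-calibrated with respect to the adversarial 0/1 loss ℓ_γ. -/

import Mathlib

open scoped RealInnerProductSpace

noncomputable section

/-- A loss assigns a value to a predictor `f`, a point `x`, and a label `y` (±1). -/
abbrev Loss (d : ℕ) := ((EuclideanSpace ℝ (Fin d)) → ℝ) → (EuclideanSpace ℝ (Fin d)) → ℝ → ℝ

variable {d : ℕ}

/-- The inner (conditional) ℓ-risk. -/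
def innerRisk (ℓ : Loss d) (f : EuclideanSpace ℝ (Fin d) → ℝ)
    (x : EuclideanSpace ℝ (Fin d)) (η : ℝ) : ℝ :=
  η * ℓ f x 1 + (1 - η) * ℓ f x (-1)

/-- The minimal inner ℓ-risk over a hypothesis set `H`. -/
def minInnerRisk (ℓ : Loss d) (H : Set (EuclideanSpace ℝ (Fin d) → ℝ))
    (x : EuclideanSpace ℝ (Fin d)) (η : ℝ) : ℝ :=
  ⨅ f : H, innerRisk ℓ f x η

/-- ℓ₁ is H-calibrated with respect to ℓ₂. -/
def Calibrated (H : Set (EuclideanSpace ℝ (Fin d) → ℝ)) (ℓ₁ ℓ₂ : Loss d) : Prop :=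
  ∀ ε > (0:ℝ), ∀ η ∈ Set.Icc (0:ℝ) 1, ∀ x : EuclideanSpace ℝ (Fin d), ‖x‖ ≤ 1 →
    ∃ δ > (0:ℝ), ∀ f ∈ H,
      innerRisk ℓ₁ f x η < minInnerRisk ℓ₁ H x η + δ →
      innerRisk ℓ₂ f x η < minInnerRisk ℓ₂ H x η + ε

/-- The adversarial 0/1 loss with perturbation radius γ. -/
def advLoss (γ : ℝ) : Loss d := fun f x y =>
  ⨆ x' : Metric.closedBall x γ, (if y * f ↑x' ≤ 0 then (1:ℝ) else 0)

/-- A margin-based loss viewed as a loss. -/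
def marginLoss (φ : ℝ → ℝ) : Loss d := fun f x y => φ (y * f x)

/-- The supremum-based surrogate of a margin-based loss. -/
def supLoss (γ : ℝ) (φ : ℝ → ℝ) : Loss d := fun f x y =>
  ⨆ x' : Metric.closedBall x γ, φ (y * f ↑x')

/-- Infimum of f over the closed γ-ball around x. -/
def infBall (γ : ℝ) (f : EuclideanSpace ℝ (Fin d) → ℝ) (x : EuclideanSpace ℝ (Fin d)) : ℝ :=
  ⨅ x' : Metric.closedBall x γ, f ↑x'

/-- Supremum of f over the closed γ-ball around x. -/
def supBall (γ : ℝ) (f : EuclideanSpace ℝ (Fin d) → ℝ) (x : EuclideanSpace ℝ (Fin d)) : ℝ :=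
  ⨆ x' : Metric.closedBall x γ, f ↑x'

/-- x is a distinguishing point for H. -/
def Distinguishing (γ : ℝ) (H : Set (EuclideanSpace ℝ (Fin d) → ℝ))
    (x : EuclideanSpace ℝ (Fin d)) : Prop :=
  ‖x‖ ≤ 1 ∧ (∃ f ∈ H, 0 < infBall γ f x) ∧ (∃ g ∈ H, supBall γ g x < 0)

/-- H is regular for adversarial calibration. -/
def RegularAdv (γ : ℝ) (H : Set (EuclideanSpace ℝ (Fin d) → ℝ)) : Prop :=
  ∃ x, Distinguishing γ H x

/-- H is symmetric. -/
def SymmetricH (H : Set (EuclideanSpace ℝ (Fin d) → ℝ)) : Prop :=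
  ∀ f ∈ H, -f ∈ H

/-- Linear hypothesis set. -/
def Hlin (d : ℕ) : Set (EuclideanSpace ℝ (Fin d) → ℝ) :=
  { f | ∃ w : EuclideanSpace ℝ (Fin d), ‖w‖ = 1 ∧ f = fun x => (inner ℝ w x : ℝ) }

/-- Generalized linear hypothesis set. -/
def Hg (d : ℕ) (g : ℝ → ℝ) (G : ℝ) : Set (EuclideanSpace ℝ (Fin d) → ℝ) :=
  { f | ∃ (w : EuclideanSpace ℝ (Fin d)) (b : ℝ), ‖w‖ = 1 ∧ |b| ≤ G ∧
      f = fun x => g (inner ℝ w x : ℝ) + b }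

/-- ReLU-based hypothesis set. -/
def Hrelu (d : ℕ) (G : ℝ) : Set (EuclideanSpace ℝ (Fin d) → ℝ) :=
  Hg d (fun t => max t 0) G

/-- One-layer ReLU neural network hypothesis set. -/
def Hnn (d n : ℕ) (Λ W : ℝ) : Set (EuclideanSpace ℝ (Fin d) → ℝ) :=
  { f | ∃ (u : Fin n → ℝ) (w : Fin n → EuclideanSpace ℝ (Fin d)),
      (∑ j, |u j|) ≤ Λ ∧ (∀ j, ‖w j‖ ≤ W) ∧
      f = fun x => ∑ j, u j * max (inner ℝ (w j) x : ℝ) 0 }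

/-- All (Borel) measurable functions. -/
def Hall (d : ℕ) : Set (EuclideanSpace ℝ (Fin d) → ℝ) :=
  { f | Measurable f }

/-- The ρ-margin loss. -/
def phiRho (ρ t : ℝ) : ℝ := min 1 (max 0 (1 - t / ρ))

/-! For a unit vector `w` and antitone `φ`, the sup-surrogate of `⟪w, ·⟫` at `x` is
`φ(y⟪w,x⟫ - γ)`, so at `η = 1/2` convexity gives
`½ φ(⟪w,x⟫ - γ) + ½ φ(-⟪w,x⟫ - γ) ≥ φ(-γ)`, with equality when `w ⊥ x`. Hence at `x = e₀` the
hyperplane `⟪e₁, ·⟫` through `x` minimises the surrogate inner risk. Its γ-ball around `x`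
meets both sides, so its adversarial inner risk is `1`, whereas `⟪e₀, ·⟫` is positive on the
whole ball (as `γ < 1`) and has adversarial inner risk `1/2`. -/

open Metric

theorem not_calibrated_of_minimizer {H : Set (EuclideanSpace ℝ (Fin d) → ℝ)} {ℓ₁ ℓ₂ : Loss d}
    {x : EuclideanSpace ℝ (Fin d)} {η : ℝ} (hx : ‖x‖ ≤ 1) (hη : η ∈ Set.Icc 0 1)
    {f g : EuclideanSpace ℝ (Fin d) → ℝ} (hf : f ∈ H) (hg : g ∈ H)
    (hf_min : innerRisk ℓ₁ f x η ≤ minInnerRisk ℓ₁ H x η)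
    (hgf : innerRisk ℓ₂ g x η < innerRisk ℓ₂ f x η)
    (hbdd : BddBelow (Set.range fun h : H => innerRisk ℓ₂ h x η)) :
    ¬ Calibrated H ℓ₁ ℓ₂ := by
  intro hcal
  obtain ⟨δ, hδ, hcal⟩ := hcal _ (sub_pos.mpr hgf) η hη x hx
  have hg_le : minInnerRisk ℓ₂ H x η ≤ innerRisk ℓ₂ g x η := ciInf_le hbdd ⟨g, hg⟩
  linarith [hcal f hf (by linarith)]

theorem innerRisk_nonneg {ℓ : Loss d} (hℓ : ∀ f x y, 0 ≤ ℓ f x y)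
    (f : EuclideanSpace ℝ (Fin d) → ℝ) (x : EuclideanSpace ℝ (Fin d)) {η : ℝ}
    (hη : η ∈ Set.Icc 0 1) : 0 ≤ innerRisk ℓ f x η :=
  add_nonneg (mul_nonneg hη.1 (hℓ f x 1)) (mul_nonneg (sub_nonneg.mpr hη.2) (hℓ f x (-1)))

section InnerProductSpace

variable {E : Type*} [NormedAddCommGroup E] [InnerProductSpace ℝ E]

theorem inner_sub_le_inner_of_mem_closedBall {v x x' : E} (hv : ‖v‖ = 1) {γ : ℝ}
    (hx' : x' ∈ closedBall x γ) : ⟪v, x⟫ - γ ≤ ⟪v, x'⟫ := by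
  have hdist : |⟪v, x' - x⟫| ≤ γ :=
    calc |⟪v, x' - x⟫| ≤ ‖v‖ * ‖x' - x‖ := abs_real_inner_le_norm v (x' - x)
      _ ≤ γ := by rw [hv, one_mul, ← dist_eq_norm]; exact hx'
  rw [inner_sub_right] at hdist
  linarith [(abs_le.mp hdist).1]

theorem iSup_closedBall_antitone_inner {φ : ℝ → ℝ} (hφ : Antitone φ) {v : E} (hv : ‖v‖ = 1)
    (x : E) {γ : ℝ} (hγ : 0 ≤ γ) :
    ⨆ x' : closedBall x γ, φ ⟪v, (x' : E)⟫ = φ (⟪v, x⟫ - γ) := by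
  have hle : ∀ x' : closedBall x γ, φ ⟪v, (x' : E)⟫ ≤ φ (⟪v, x⟫ - γ) := fun x' =>
    hφ (inner_sub_le_inner_of_mem_closedBall hv x'.2)
  have hmem : x - γ • v ∈ closedBall x γ := by
    rw [mem_closedBall, dist_eq_norm, sub_sub_cancel_left, norm_neg, norm_smul, hv, mul_one,
      Real.norm_of_nonneg hγ]
  have hval : ⟪v, x - γ • v⟫ = ⟪v, x⟫ - γ := by
    rw [inner_sub_right, real_inner_smul_right, real_inner_self_eq_norm_sq, hv]
    ring
  have : Nonempty (closedBall x γ) := ⟨⟨_, hmem⟩⟩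
  refine le_antisymm (ciSup_le hle) ?_
  calc φ (⟪v, x⟫ - γ) = φ ⟪v, x - γ • v⟫ := by rw [hval]
    _ ≤ _ := le_ciSup ⟨_, Set.forall_mem_range.mpr hle⟩ (⟨_, hmem⟩ : closedBall x γ)

end InnerProductSpace

section LinearHypotheses

variable {γ : ℝ} {w : EuclideanSpace ℝ (Fin d)}

theorem supLoss_inner {φ : ℝ → ℝ} (hφ : Antitone φ) (hγ : 0 ≤ γ) (hw : ‖w‖ = 1)
    (x : EuclideanSpace ℝ (Fin d)) {y : ℝ} (hy : |y| = 1) :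
    supLoss γ φ (fun z => ⟪w, z⟫) x y = φ (y * ⟪w, x⟫ - γ) := by
  have hyw : ‖y • w‖ = 1 := by rw [norm_smul, Real.norm_eq_abs, hy, hw, one_mul]
  simp only [supLoss, ← real_inner_smul_left]
  exact iSup_closedBall_antitone_inner hφ hyw x hγ

theorem innerRisk_supLoss_inner {φ : ℝ → ℝ} (hφ : Antitone φ) (hγ : 0 ≤ γ) (hw : ‖w‖ = 1)
    (x : EuclideanSpace ℝ (Fin d)) (η : ℝ) :
    innerRisk (supLoss γ φ) (fun z => ⟪w, z⟫) x η =
      η * φ (⟪w, x⟫ - γ) + (1 - η) * φ (-⟪w, x⟫ - γ) := by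
  rw [innerRisk, supLoss_inner hφ hγ hw x abs_one, supLoss_inner hφ hγ hw x (by norm_num),
    one_mul, neg_one_mul]

theorem innerRisk_supLoss_inner_half_le {φ : ℝ → ℝ} (hconv : ConvexOn ℝ Set.univ φ)
    (hφ : Antitone φ) (hγ : 0 ≤ γ) {x w' : EuclideanSpace ℝ (Fin d)} (hw : ‖w‖ = 1)
    (hw' : ‖w'‖ = 1) (hwx : ⟪w, x⟫ = 0) :
    innerRisk (supLoss γ φ) (fun z => ⟪w, z⟫) x (1 / 2) ≤
      innerRisk (supLoss γ φ) (fun z => ⟪w', z⟫) x (1 / 2) := by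
  rw [innerRisk_supLoss_inner hφ hγ hw, innerRisk_supLoss_inner hφ hγ hw', hwx]
  set a := ⟪w', x⟫
  calc 1 / 2 * φ (0 - γ) + (1 - 1 / 2) * φ (-0 - γ)
      = φ ((1 / 2 : ℝ) • (a - γ) + (1 / 2 : ℝ) • (-a - γ)) := by
        simp only [smul_eq_mul]; ring_nf
    _ ≤ (1 / 2 : ℝ) • φ (a - γ) + (1 / 2 : ℝ) • φ (-a - γ) :=
        hconv.2 (Set.mem_univ _) (Set.mem_univ _) (by norm_num) (by norm_num) (by norm_num)
    _ = 1 / 2 * φ (a - γ) + (1 - 1 / 2) * φ (-a - γ) := by simp only [smul_eq_mul]; ring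

theorem advLoss_eq_supLoss :
    (advLoss γ : Loss d) = supLoss γ (fun t => if t ≤ 0 then 1 else 0) := rfl

theorem advLoss_nonneg (f : EuclideanSpace ℝ (Fin d) → ℝ) (x : EuclideanSpace ℝ (Fin d))
    (y : ℝ) : 0 ≤ advLoss γ f x y :=
  Real.iSup_nonneg fun _ => by split_ifs <;> norm_num

theorem innerRisk_advLoss_inner (hγ : 0 ≤ γ) (hw : ‖w‖ = 1) (x : EuclideanSpace ℝ (Fin d))
    (η : ℝ) :
    innerRisk (advLoss γ) (fun z => ⟪w, z⟫) x η =
      η * (if ⟪w, x⟫ - γ ≤ 0 then 1 else 0) + (1 - η) * (if -⟪w, x⟫ - γ ≤ 0 then 1 else 0) := by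
  have hanti : Antitone fun t : ℝ => if t ≤ 0 then (1 : ℝ) else 0 := fun a b hab => by
    dsimp only
    split_ifs <;> linarith
  rw [advLoss_eq_supLoss, innerRisk_supLoss_inner hanti hγ hw]

end LinearHypotheses

theorem stmt5_general (d : ℕ) (hd : 2 ≤ d) (γ : ℝ) (hγ0 : 0 < γ) (hγ1 : γ < 1)
    (φ : ℝ → ℝ) (hconv : ConvexOn ℝ Set.univ φ)
    (hanti : Antitone φ) :
    ¬ Calibrated (Hlin d) (supLoss γ φ) (advLoss γ) := by
  set x : EuclideanSpace ℝ (Fin d) := EuclideanSpace.single ⟨0, by omega⟩ 1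
  set w : EuclideanSpace ℝ (Fin d) := EuclideanSpace.single ⟨1, by omega⟩ 1
  have hortho := EuclideanSpace.orthonormal_single (𝕜 := ℝ) (ι := Fin d)
  have hx : ‖x‖ = 1 := hortho.norm_eq_one _
  have hw : ‖w‖ = 1 := hortho.norm_eq_one _
  have hwx : ⟪w, x⟫ = 0 := hortho.inner_eq_zero (by simp [Fin.ext_iff])
  have hxx : ⟪x, x⟫ = 1 := by rw [real_inner_self_eq_norm_sq, hx, one_pow]
  have hη : (1 / 2 : ℝ) ∈ Set.Icc 0 1 := by norm_num
  refine not_calibrated_of_minimizer hx.le hη (f := fun z => ⟪w, z⟫) (g := fun z => ⟪x, z⟫)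
    ⟨w, hw, rfl⟩ ⟨x, hx, rfl⟩ ?_ ?_ ⟨0, ?_⟩
  · have : Nonempty (Hlin d) := ⟨⟨_, w, hw, rfl⟩⟩
    exact le_ciInf fun ⟨_, w', hw', hf⟩ => hf ▸
      innerRisk_supLoss_inner_half_le hconv hanti hγ0.le hw hw' hwx
  · rw [innerRisk_advLoss_inner hγ0.le hw, innerRisk_advLoss_inner hγ0.le hx, hwx, hxx]
    rw [if_neg (by linarith), if_pos (by linarith), if_pos (by linarith), if_pos (by linarith)]
    norm_num
  · rintro _ ⟨h, rfl⟩
    exact innerRisk_nonneg advLoss_nonneg _ x hη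

theorem stmt5 (d : ℕ) (hd : 2 ≤ d) (γ : ℝ) (hγ0 : 0 < γ) (hγ1 : γ < 1)
    (φ : ℝ → ℝ) (hφ0 : ∀ t, 0 ≤ φ t) (hconv : ConvexOn ℝ Set.univ φ)
    (hanti : Antitone φ) :
    ¬ Calibrated (Hlin d) (supLoss γ φ) (advLoss γ) :=
  stmt5_general d hd γ hγ0 hγ1 φ hconv hanti

end
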